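/- arXiv:1211.0217 — 2 statements merged into one kernel-verified Lean document; each statement's English description precedes it below -/
import Mathlib

section
/- Let h: ℂ → ℝ be smooth and ψ₁,...,ψ_N entire functions. Set A = d - ∂h + ∂̄h and φ_j = e^{-h}ψ_j. Then the pair (A, (φ₁,...,φ_N)) satisfies the vortex equation ΛF_A + μ(φ) = 0 with μ(z) = -(i/2)(∑|z_j|² - 1) and the standard area form on ℂ if and only if h solves the Kazdan–Warner equation Δh + (1/2)(e^{-2h}∑_{j=1}^N |ψ_j|² - 1) = 0. -/
/-- The Euclidean Laplacian on ℂ ≅ ℝ². -/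
noncomputable def lap (f : ℂ → ℝ) (z : ℂ) : ℝ :=
  fderiv ℝ (fun w => fderiv ℝ f w 1) z 1 +
    fderiv ℝ (fun w => fderiv ℝ f w Complex.I) z Complex.I

/- STATEMENT 16: with A = d - ∂h + ∂̄h (connection coefficients Φ = i∂h/∂y, Ψ = -i∂h/∂x,
so ΛF_A = ∂Ψ/∂x - ∂Φ/∂y = -iΔh) and φ_j = e^{-h}ψ_j with ψ_j entire, the vortex equation
ΛF_A + μ(φ) = 0, μ(z) = -(i/2)(∑|z_j|² - 1), holds iff h solves the Kazdan–Warner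
equation Δh + (1/2)(e^{-2h}∑|ψ_j|² - 1) = 0. -/
lemma aux_deriv (g : ℂ → ℝ) (hg : Differentiable ℝ g) (c : ℂ) (z v : ℂ) :
    fderiv ℝ (fun w => c * ((g w : ℝ) : ℂ)) z v = c * (fderiv ℝ g z v : ℝ) := by
  have hg' : DifferentiableAt ℝ (fun w => ((g w : ℝ) : ℂ)) z :=
    Complex.ofRealCLM.differentiableAt.comp z (hg z)
  rw [fderiv_const_mul hg']
  have : fderiv ℝ (fun w => ((g w : ℝ) : ℂ)) z =
      Complex.ofRealCLM.comp (fderiv ℝ g z) :=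
    (Complex.ofRealCLM.hasFDerivAt.comp z (hg z).hasFDerivAt).fderiv
  simp [this]

theorem stmt16 (N : ℕ) (h : ℂ → ℝ) (hh : ContDiff ℝ (⊤ : ℕ∞) h)
    (ψ : Fin N → ℂ → ℂ) (hψ : ∀ j, Differentiable ℂ (ψ j)) :
    ((∀ z : ℂ,
        (fderiv ℝ (fun w => -Complex.I * (fderiv ℝ h w 1 : ℝ)) z 1
          - fderiv ℝ (fun w => Complex.I * (fderiv ℝ h w Complex.I : ℝ)) z Complex.I)
        + (-(Complex.I / 2)) * (((∑ j, ‖(Real.exp (-(h z)) : ℂ) * ψ j z‖ ^ 2 : ℝ) : ℂ) - 1)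
        = 0) ↔
      (∀ z : ℂ, lap h z
        + (1/2) * (Real.exp (-(2 * h z)) * (∑ j, ‖ψ j z‖ ^ 2) - 1) = 0)) := by
  have hfd : ContDiff ℝ (⊤ : ℕ∞) (fderiv ℝ h) := hh.fderiv_right (by simp)
  have hd1 : ∀ v : ℂ, Differentiable ℝ (fun w => fderiv ℝ h w v) := fun v =>
    (hfd.clm_apply contDiff_const).differentiable (by simp)
  have key : ∀ z : ℂ,
      (fderiv ℝ (fun w => -Complex.I * (fderiv ℝ h w 1 : ℝ)) z 1
          - fderiv ℝ (fun w => Complex.I * (fderiv ℝ h w Complex.I : ℝ)) z Complex.I)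
        + (-(Complex.I / 2)) * (((∑ j, ‖(Real.exp (-(h z)) : ℂ) * ψ j z‖ ^ 2 : ℝ) : ℂ) - 1)
        = -Complex.I * ((lap h z
        + (1/2) * (Real.exp (-(2 * h z)) * (∑ j, ‖ψ j z‖ ^ 2) - 1) : ℝ) : ℂ) := by
    intro z
    rw [aux_deriv _ (hd1 1) _ z 1, aux_deriv _ (hd1 Complex.I) _ z Complex.I]
    have hsum : (∑ j, ‖(Real.exp (-(h z)) : ℂ) * ψ j z‖ ^ 2 : ℝ)
        = Real.exp (-(2 * h z)) * (∑ j, ‖ψ j z‖ ^ 2) := by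
      rw [Finset.mul_sum]
      refine Finset.sum_congr rfl fun j _ => ?_
      rw [norm_mul, Complex.norm_real, Real.norm_eq_abs, abs_of_pos (Real.exp_pos _),
        mul_pow, sq, ← Real.exp_add]
      ring_nf
    rw [hsum, lap]
    push_cast
    ring
  constructor
  · intro H z
    have := H z
    rw [key z] at this
    have h2 : ((lap h z + (1/2) * (Real.exp (-(2 * h z)) * (∑ j, ‖ψ j z‖ ^ 2) - 1) : ℝ) : ℂ) = 0 := by
      rcases mul_eq_zero.mp this with h3 | h3
      · exact absurd h3 (by simp [Complex.I_ne_zero])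
      · exact h3
    exact_mod_cast h2
  · intro H z
    rw [key z, H z]
    simp
end

section
/- The Kazdan–Warner equation Δh + (1/2)(b e^{-2h} - 1) = 0 on ℂ with constant b > 0 has exactly one solution h that is bounded with asymptotic value (1/2)log b at infinity, namely the constant h ≡ (1/2)log b. -/
open Filter Topology

/-- Second derivative test: at a local max of a smooth function, the second derivative
is nonpositive. -/
lemma aux_second_deriv_nonpos {g : ℝ → ℝ} (hg : ContDiff ℝ (⊤ : ℕ∞) g) (hmax : IsLocalMax g 0) :
    deriv (deriv g) 0 ≤ 0 := by
  by_contra hcon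
  push_neg at hcon
  have hg' : ContDiff ℝ (↑(⊤:ℕ∞)) g := hg.of_le (by simp)
  have hdg : ContDiff ℝ (↑(⊤:ℕ∞)) (deriv g) := (contDiff_infty_iff_deriv.mp hg').2
  have h0 : deriv g 0 = 0 := hmax.deriv_eq_zero
  have hd : HasDerivAt (deriv g) (deriv (deriv g) 0) 0 :=
    (hdg.differentiable (by simp) 0).hasDerivAt
  have hslope := hasDerivAt_iff_tendsto_slope.mp hd
  have hev : ∀ᶠ t in 𝓝[≠] (0:ℝ), 0 < slope (deriv g) 0 t :=
    hslope.eventually (eventually_gt_nhds hcon)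
  have hev' : ∀ᶠ t in 𝓝[>] (0:ℝ), 0 < slope (deriv g) 0 t :=
    hev.filter_mono (nhdsWithin_mono _ (fun x hx => ne_of_gt hx))
  obtain ⟨u, hu, hsub⟩ := mem_nhdsGT_iff_exists_Ioo_subset.mp hev'
  have hu0 : (0:ℝ) < u := hu
  have hderivpos : ∀ t ∈ Set.Ioo (0:ℝ) u, 0 < deriv g t := by
    intro t ht
    have := hsub ht
    simp only [Set.mem_setOf_eq, slope, h0, sub_zero, vsub_eq_sub, smul_eq_mul] at this
    have ht0 : 0 < t := ht.1
    have h' := mul_pos ht0 this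
    rwa [mul_inv_cancel_left₀ ht0.ne'] at h'
  obtain ⟨ε, hε, hεball⟩ := Metric.eventually_nhds_iff.mp hmax
  set t0 : ℝ := min (u/2) (ε/2) with ht0def
  have ht0pos : 0 < t0 := lt_min (by linarith) (by linarith)
  have ht0u : t0 < u := lt_of_le_of_lt (min_le_left _ _) (by linarith)
  have hmono : StrictMonoOn g (Set.Icc 0 t0) := by
    apply strictMonoOn_of_deriv_pos (convex_Icc 0 t0) hg.continuous.continuousOn
    intro x hx
    rw [interior_Icc] at hx
    exact hderivpos x ⟨hx.1, lt_trans hx.2 ht0u⟩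
  have hlt : g 0 < g t0 :=
    hmono (Set.left_mem_Icc.mpr ht0pos.le) (Set.right_mem_Icc.mpr ht0pos.le) ht0pos
  have : g t0 ≤ g 0 := by
    apply hεball
    rw [Real.dist_eq, sub_zero, abs_of_pos ht0pos]
    exact lt_of_le_of_lt (min_le_right _ _) (by linarith)
  linarith

/-- Derivative along a line. -/
lemma aux_line_deriv {G : ℂ → ℝ} (hG : Differentiable ℝ G) (z0 v : ℂ) (t : ℝ) :
    HasDerivAt (fun s : ℝ => G (z0 + s • v)) (fderiv ℝ G (z0 + t • v) v) t := by
  have hL : HasDerivAt (fun s : ℝ => z0 + s • v) v t := by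
    simpa using ((hasDerivAt_id t).smul_const v).const_add z0
  exact ((hG (z0 + t • v)).hasFDerivAt).comp_hasDerivAt t hL

/-- At a local max of a smooth function, second directional derivatives are nonpositive. -/
lemma aux_second_dir_nonpos {f : ℂ → ℝ} (hf : ContDiff ℝ (⊤ : ℕ∞) f) {z0 : ℂ}
    (hmax : IsLocalMax f z0) (v : ℂ) :
    fderiv ℝ (fun w => fderiv ℝ f w v) z0 v ≤ 0 := by
  set F : ℂ → ℝ := fun w => fderiv ℝ f w v with hF
  have hFc : ContDiff ℝ (⊤ : ℕ∞) F := (hf.fderiv_right (by simp)).clm_apply contDiff_const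
  set g : ℝ → ℝ := fun s => f (z0 + s • v) with hgdef
  have hline : ContDiff ℝ (⊤ : ℕ∞) (fun s : ℝ => z0 + s • v) :=
    contDiff_const.add (contDiff_id.smul contDiff_const)
  have hg : ContDiff ℝ (⊤ : ℕ∞) g := hf.comp hline
  have hgmax : IsLocalMax g 0 := by
    have hct : ContinuousAt (fun s : ℝ => z0 + s • v) 0 := hline.continuous.continuousAt
    have h0 : (fun s : ℝ => z0 + s • v) 0 = z0 := by simp
    have := hct.tendsto.eventually (h0 ▸ hmax)
    simpa [IsLocalMax, IsMaxFilter, hgdef, h0] using this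
  have hderiv : deriv g = fun s => F (z0 + s • v) := by
    funext s
    exact (aux_line_deriv (hf.differentiable (by simp)) z0 v s).deriv
  have h2 : deriv (deriv g) 0 = fderiv ℝ F z0 v := by
    rw [hderiv]
    have := (aux_line_deriv (hFc.differentiable (by simp)) z0 v 0).deriv
    simpa using this
  have := aux_second_deriv_nonpos hg hgmax
  rwa [h2] at this

lemma aux_lap_nonpos {f : ℂ → ℝ} (hf : ContDiff ℝ (⊤ : ℕ∞) f) {z0 : ℂ} (hmax : IsLocalMax f z0) :
    lap f z0 ≤ 0 := by
  have h1 := aux_second_dir_nonpos hf hmax 1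
  have h2 := aux_second_dir_nonpos hf hmax Complex.I
  unfold lap
  linarith

lemma aux_lap_neg (f : ℂ → ℝ) (z : ℂ) : lap (fun w => -f w) z = - lap f z := by
  unfold lap
  simp only [fderiv_fun_neg, ContinuousLinearMap.neg_apply]
  ring

lemma aux_lap_nonneg {f : ℂ → ℝ} (hf : ContDiff ℝ (⊤ : ℕ∞) f) {z0 : ℂ} (hmin : IsLocalMin f z0) :
    0 ≤ lap f z0 := by
  have := aux_lap_nonpos (f := fun w => -f w) (hf.neg) hmin.neg
  rw [aux_lap_neg] at this
  linarith

/- STATEMENT 17: the Kazdan–Warner equation Δh + (1/2)(b e^{-2h} - 1) = 0, b > 0, has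
exactly one bounded solution with asymptotic value (1/2)log b, namely the constant. -/
theorem stmt17 (b : ℝ) (hb : 0 < b) :
    (∀ z : ℂ, lap (fun _ => (1/2) * Real.log b) z
      + (1/2) * (b * Real.exp (-(2 * ((1/2) * Real.log b))) - 1) = 0) ∧
    (∀ h : ℂ → ℝ, ContDiff ℝ (⊤ : ℕ∞) h → (∃ M : ℝ, ∀ z, |h z| ≤ M) →
      Filter.Tendsto h (Filter.cocompact ℂ) (nhds ((1/2) * Real.log b)) →
      (∀ z : ℂ, lap h z + (1/2) * (b * Real.exp (-(2 * h z)) - 1) = 0) →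
      h = fun _ => (1/2) * Real.log b) := by
  have hexp : ∀ x : ℝ, b * Real.exp (-(2 * x)) = Real.exp (Real.log b - 2 * x) := by
    intro x
    rw [sub_eq_add_neg, Real.exp_add, Real.exp_log hb]
  constructor
  · intro z
    have h1 : lap (fun _ => (1/2) * Real.log b) z = 0 := by
      have e1 : (fun w : ℂ => fderiv ℝ (fun _ : ℂ => (1/2) * Real.log b) w 1) =
          fun _ : ℂ => (0:ℝ) := by
        funext w; rw [fderiv_fun_const]; simp
      have e2 : (fun w : ℂ => fderiv ℝ (fun _ : ℂ => (1/2) * Real.log b) w Complex.I) =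
          fun _ : ℂ => (0:ℝ) := by
        funext w; rw [fderiv_fun_const]; simp
      unfold lap
      rw [e1, e2, fderiv_fun_const]
      simp
    rw [h1, hexp]
    have : Real.log b - 2 * ((1/2) * Real.log b) = 0 := by ring
    rw [this, Real.exp_zero]
    ring
  · intro h hsm _ htend heq
    set c : ℝ := (1/2) * Real.log b with hc
    have hcont : Continuous h := hsm.continuous
    have hle : ∀ z, h z ≤ c := by
      by_contra hcon
      push_neg at hcon
      obtain ⟨z1, hz1⟩ := hcon
      have hev : ∀ᶠ z in cocompact ℂ, h z < h z1 := htend (Iio_mem_nhds hz1)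
      obtain ⟨K, hK, hKsub⟩ := mem_cocompact.mp hev
      have hz1K : z1 ∈ K := by
        by_contra hz1K
        have := hKsub hz1K
        simp only [Set.mem_setOf_eq] at this
        exact lt_irrefl _ this
      obtain ⟨z0, hz0K, hz0max⟩ := hK.exists_isMaxOn ⟨z1, hz1K⟩ hcont.continuousOn
      have hglobal : ∀ z, h z ≤ h z0 := by
        intro z
        by_cases hz : z ∈ K
        · exact hz0max hz
        · exact le_trans (le_of_lt (hKsub hz)) (hz0max hz1K)
      have hlm : IsLocalMax h z0 := Filter.Eventually.of_forall hglobal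
      have hlap : lap h z0 ≤ 0 := aux_lap_nonpos hsm hlm
      have heq0 := heq z0
      have hz0c : c < h z0 := lt_of_lt_of_le hz1 (hz0max hz1K)
      have : b * Real.exp (-(2 * h z0)) < 1 := by
        rw [hexp]
        have : Real.log b - 2 * h z0 < 0 := by
          rw [hc] at hz0c; linarith
        calc Real.exp (Real.log b - 2 * h z0) < Real.exp 0 := Real.exp_lt_exp.mpr this
          _ = 1 := Real.exp_zero
      linarith
    have hge : ∀ z, c ≤ h z := by
      by_contra hcon
      push_neg at hcon
      obtain ⟨z1, hz1⟩ := hcon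
      have hev : ∀ᶠ z in cocompact ℂ, h z1 < h z := htend (Ioi_mem_nhds hz1)
      obtain ⟨K, hK, hKsub⟩ := mem_cocompact.mp hev
      have hz1K : z1 ∈ K := by
        by_contra hz1K
        have := hKsub hz1K
        simp only [Set.mem_setOf_eq] at this
        exact lt_irrefl _ this
      obtain ⟨z0, hz0K, hz0min⟩ := hK.exists_isMinOn ⟨z1, hz1K⟩ hcont.continuousOn
      have hglobal : ∀ z, h z0 ≤ h z := by
        intro z
        by_cases hz : z ∈ K
        · exact hz0min hz
        · exact le_trans (hz0min hz1K) (le_of_lt (hKsub hz))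
      have hlm : IsLocalMin h z0 := Filter.Eventually.of_forall hglobal
      have hlap : 0 ≤ lap h z0 := aux_lap_nonneg hsm hlm
      have heq0 := heq z0
      have hz0c : h z0 < c := lt_of_le_of_lt (hz0min hz1K) hz1
      have : 1 < b * Real.exp (-(2 * h z0)) := by
        rw [hexp]
        have : 0 < Real.log b - 2 * h z0 := by
          rw [hc] at hz0c; linarith
        calc (1:ℝ) = Real.exp 0 := Real.exp_zero.symm
          _ < Real.exp (Real.log b - 2 * h z0) := Real.exp_lt_exp.mpr this
      linarith
    funext z
    exact le_antisymm (hle z) (hge z)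
end
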